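/- Let N be a squarefree positive integer and z ∈ ℍ a point of the upper half-plane satisfying Im(σ·z) ≤ Im(z) for all σ ∈ A₀(N). Then Im(z) ≥ √3/(2N), and for every pair of integers (c,d) ≠ (0,0) one has |cz + d|² ≥ gcd(c,N)/N (with the convention gcd(0,N) = N). -/

import Mathlib

open MeasureTheory Real Matrix Set

noncomputable section

/-- 2×2 real matrices. -/
abbrev M2 := Matrix (Fin 2) (Fin 2) ℝ

/-- The lattice R(ℓ) = { (a, b; c, d) : a, d ∈ ℤ, b ∈ (1/ℓ)ℤ, c ∈ (N/ℓ)ℤ }. -/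
def Rlat (N ℓ : ℕ) : Set M2 :=
  {γ | (∃ n : ℤ, γ 0 0 = (n : ℝ)) ∧ (∃ n : ℤ, γ 0 1 = (n : ℝ) / ℓ) ∧
       (∃ n : ℤ, γ 1 0 = (n : ℝ) * N / ℓ) ∧ (∃ n : ℤ, γ 1 1 = (n : ℝ))}

/-- The conjugated lattice R(ℓ;g) = g⁻¹ · R(ℓ) · g. -/
def Rconj (N ℓ : ℕ) (g : M2) : Set M2 := {γ | g * γ * g⁻¹ ∈ Rlat N ℓ}

/-- P(γ): half the sum of the squares of the four entries of γ. -/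
def Pfun (γ : M2) : ℝ := ((γ 0 0) ^ 2 + (γ 0 1) ^ 2 + (γ 1 0) ^ 2 + (γ 1 1) ^ 2) / 2

/-- Ω(δ,L) = {γ : P(γ) ≤ L² and P(γ) − det γ ≤ 2δL²}. -/
def OmegaSet (δ L : ℝ) : Set M2 := {γ | Pfun γ ≤ L ^ 2 ∧ Pfun γ - γ.det ≤ 2 * δ * L ^ 2}

/-- Ω⋆(δ,L): nonzero elements of Ω(δ,L). -/
def OmegaStar (δ L : ℝ) : Set M2 := {γ | γ ∈ OmegaSet δ L ∧ γ ≠ 0}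

/-- Ψ(δ,L) = {γ : P(γ) ≤ L² and P(γ) + det γ ≤ 2δL²}. -/
def PsiSet (δ L : ℝ) : Set M2 := {γ | Pfun γ ≤ L ^ 2 ∧ Pfun γ + γ.det ≤ 2 * δ * L ^ 2}

/-- Ψ⋆(δ,L): nonzero elements of Ψ(δ,L). -/
def PsiStar (δ L : ℝ) : Set M2 := {γ | γ ∈ PsiSet δ L ∧ γ ≠ 0}

/-- Möbius action of a 2×2 real matrix on a complex number. -/
def moebius (m : M2) (z : ℂ) : ℂ :=
  ((m 0 0 : ℂ) * z + (m 0 1 : ℂ)) / ((m 1 0 : ℂ) * z + (m 1 1 : ℂ))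

/-- A₀(N): determinant-one matrices of the form Q^{−1/2}·(Qa, b; Nc, Qd)
    with Q a positive divisor of N and a,b,c,d ∈ ℤ. -/
def AtkinLehner (N : ℕ) : Set M2 :=
  {σ | σ.det = 1 ∧ ∃ (Q : ℕ) (a b c d : ℤ), 0 < Q ∧ Q ∣ N ∧
     σ = (Real.sqrt Q)⁻¹ • !![(Q : ℝ) * a, (b : ℝ); (N : ℝ) * c, (Q : ℝ) * d]}

/-- H(g) = sup_{σ ∈ A₀(N)} Im(σ·(g·i)). -/
def Hgt (N : ℕ) (g : M2) : ℝ :=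
  sSup ((fun σ => (moebius σ (moebius g Complex.I)).im) '' AtkinLehner N)

/-!
For coprime `(c, d)`, squarefreeness of `N` makes `Q = N / gcd(c, N)` prime to `c`, hence to
`Q d`, and a Bézout relation `u (Q d) + v c = 1` yields the Atkin–Lehner matrix
`Q^{-1/2} (Q u, -v; N c / gcd(c, N), Q d)`, whose bottom row is `√Q (c, d)`. Since
`Im(σ z) = Im z / |j(σ, z)|²`, maximality of `Im z` forces `Q |cz + d|² ≥ 1`, i.e.
`|cz + d|² ≥ gcd(c, N) / N`. A general pair is `e` times a coprime one, and
`gcd(e c, N) ≤ e² gcd(c, N)`. Finally `c = N` and `d` the integer nearest to `-N Re z` give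
`(N Im z)² ≥ 1 - 1/4`.
-/

lemma moebius_im (m : M2) {z : ℂ} (h : (m 1 0 : ℂ) * z + m 1 1 ≠ 0) :
    (moebius m z).im = m.det * z.im / Complex.normSq ((m 1 0 : ℂ) * z + m 1 1) := by
  have hns : Complex.normSq ((m 1 0 : ℂ) * z + m 1 1) ≠ 0 := by
    rwa [ne_eq, Complex.normSq_eq_zero]
  rw [moebius, Matrix.det_fin_two, Complex.div_im]
  simp only [Complex.normSq_apply, Complex.add_re, Complex.add_im, Complex.mul_re,
    Complex.mul_im, Complex.ofReal_re, Complex.ofReal_im] at *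
  field_simp
  ring

lemma intCast_mul_add_ne_zero {z : ℂ} (hz : z.im ≠ 0) {c d : ℤ} (hcd : ¬(c = 0 ∧ d = 0)) :
    (c : ℂ) * z + d ≠ 0 := by
  simpa using UpperHalfPlane.linear_ne_zero_of_im (cd := ![(c : ℝ), d]) hz
    (by simpa [funext_iff, Fin.forall_fin_two] using hcd)

lemma isCoprime_div_gcd_of_squarefree {N : ℕ} (hN : Squarefree N) (c : ℤ) :
    IsCoprime ((N / Int.gcd c N : ℕ) : ℤ) c := by
  rcases eq_or_ne c 0 with rfl | hc
  · simpa [Nat.div_self (Nat.pos_of_ne_zero hN.ne_zero)] using isCoprime_one_left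
  · rw [Int.isCoprime_iff_gcd_eq_one, Int.gcd_eq_natAbs, Int.natAbs_natCast,
      Int.gcd_eq_natAbs, Int.natAbs_natCast, Nat.gcd_comm c.natAbs N]
    exact Nat.coprime_div_gcd_of_squarefree hN (Int.natAbs_ne_zero.2 hc)

lemma Int.gcd_mul_natCast_dvd (c : ℤ) (e N : ℕ) : Int.gcd (c * e) N ∣ Int.gcd c N * e := by
  simpa [Int.gcd_mul_right] using Int.gcd_dvd_gcd_mul_right_right (c * e) N e

lemma exists_mem_atkinLehner_bottom_row {N : ℕ} (hN : Squarefree N) {c d : ℤ}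
    (hcd : IsCoprime c d) :
    ∃ Q : ℕ, Q * Int.gcd c N = N ∧
      ∃ σ ∈ AtkinLehner N, σ 1 0 = √(Q : ℝ) * c ∧ σ 1 1 = √(Q : ℝ) * d := by
  set g := Int.gcd c N
  set Q := N / g
  have hgN : g ∣ N := Int.natCast_dvd_natCast.1 (Int.gcd_dvd_right c N)
  have hQ : 0 < Q :=
    Nat.div_pos (Nat.le_of_dvd (Nat.pos_of_ne_zero hN.ne_zero) hgN)
      (Int.gcd_pos_of_ne_zero_right c (by exact_mod_cast hN.ne_zero))
  have hNQ : (N : ℝ) = Q * g := by exact_mod_cast (Nat.div_mul_cancel hgN).symm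
  obtain ⟨c₁, hc₁⟩ := Int.gcd_dvd_left c N
  obtain ⟨u, v, huv⟩ := (isCoprime_div_gcd_of_squarefree hN c).mul_left hcd.symm
  have hc : (c : ℝ) = g * c₁ := by exact_mod_cast hc₁
  have huv' : (u : ℝ) * (Q * d) + v * c = 1 := by exact_mod_cast huv
  have hsQ : √(Q : ℝ) ^ 2 = Q := Real.sq_sqrt (Nat.cast_nonneg Q)
  refine ⟨Q, Nat.div_mul_cancel hgN,
    (√(Q : ℝ))⁻¹ • !![(Q : ℝ) * u, ((-v : ℤ) : ℝ); (N : ℝ) * c₁, (Q : ℝ) * d],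
    ⟨?_, Q, u, -v, c₁, d, hQ, Nat.div_dvd_of_dvd hgN, rfl⟩, ?_, ?_⟩
  · have hdet : (Q : ℝ) * u * (Q * d) - ((-v : ℤ) : ℝ) * (N * c₁) = Q := by
      push_cast
      linear_combination (Q : ℝ) * huv' - Q * v * hc + v * c₁ * hNQ
    rw [Matrix.det_smul, Matrix.det_fin_two_of, Fintype.card_fin, inv_pow, hsQ, hdet,
      inv_mul_cancel₀ (by exact_mod_cast hQ.ne')]
  all_goals
    simp only [Matrix.smul_apply, of_apply, cons_val', cons_val_zero, cons_val_one, empty_val',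
      cons_val_fin_one, smul_eq_mul]
    rw [inv_mul_eq_iff_eq_mul₀ (by positivity), ← mul_assoc, ← sq, hsQ]
  · rw [hNQ, hc]; ring

section MaximalPoint

variable {N : ℕ} {z : ℂ}

lemma gcd_div_le_normSq_of_isCoprime (hN : Squarefree N) (hz : 0 < z.im)
    (hmax : ∀ σ ∈ AtkinLehner N, (moebius σ z).im ≤ z.im) {c d : ℤ}
    (hcd : IsCoprime c d) :
    (Int.gcd c N : ℝ) / N ≤ Complex.normSq (c * z + d) := by
  obtain ⟨Q, hQg, σ, hσ, hσc, hσd⟩ := exists_mem_atkinLehner_bottom_row hN hcd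
  have hQN : Q * Int.gcd c N ≠ 0 := by rw [hQg]; exact hN.ne_zero
  have hQ : (0 : ℝ) < Q := Nat.cast_pos.2 (Nat.pos_of_ne_zero (left_ne_zero_of_mul hQN))
  have hne : (c : ℂ) * z + d ≠ 0 :=
    intCast_mul_add_ne_zero hz.ne' fun h => not_isCoprime_zero_zero (h.1 ▸ h.2 ▸ hcd)
  have hden : (σ 1 0 : ℂ) * z + σ 1 1 = √(Q : ℝ) * (c * z + d) := by
    rw [hσc, hσd]; push_cast; ring
  have him : (moebius σ z).im = z.im / (Q * Complex.normSq (c * z + d)) := by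
    rw [moebius_im σ (hden ▸ mul_ne_zero (by exact_mod_cast (Real.sqrt_pos.2 hQ).ne') hne),
      hσ.1, hden, Complex.normSq_mul, Complex.normSq_ofReal, Real.mul_self_sqrt hQ.le, one_mul]
  have hn : 0 < Complex.normSq (c * z + d) := Complex.normSq_pos.2 hne
  have hQn : 1 ≤ Q * Complex.normSq (c * z + d) := by
    have := hmax σ hσ
    rwa [him, div_le_iff₀ (by positivity), le_mul_iff_one_le_right hz] at this
  have hgcd : (Int.gcd c N : ℝ) / N = 1 / Q := by
    have hQgR : (Q : ℝ) * Int.gcd c N = N := by exact_mod_cast hQg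
    rw [← hQgR, div_mul_cancel_right₀ (Nat.cast_ne_zero.2 (right_ne_zero_of_mul hQN)), one_div]
  rw [hgcd, div_le_iff₀ hQ]
  linarith

lemma gcd_div_le_normSq (hN : Squarefree N) (hz : 0 < z.im)
    (hmax : ∀ σ ∈ AtkinLehner N, (moebius σ z).im ≤ z.im) {c d : ℤ}
    (hcd : ¬(c = 0 ∧ d = 0)) :
    (Int.gcd c N : ℝ) / N ≤ Complex.normSq (c * z + d) := by
  obtain ⟨e, c, d, he, hcop, rfl, rfl⟩ :=
    Int.exists_gcd_one' (Int.gcd_pos_iff.2 (not_and_or.1 hcd))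
  have hgcd : Int.gcd (c * e) N ≤ e ^ 2 * Int.gcd c N := by
    have hpos : 0 < Int.gcd c N := Int.gcd_pos_of_ne_zero_right c (by exact_mod_cast hN.ne_zero)
    calc Int.gcd (c * e) N ≤ Int.gcd c N * e :=
          Nat.le_of_dvd (by positivity) (Int.gcd_mul_natCast_dvd c e N)
      _ ≤ e ^ 2 * Int.gcd c N := by
          rw [mul_comm]; exact Nat.mul_le_mul_right _ (Nat.le_self_pow two_ne_zero e)
  calc (Int.gcd (c * e) N : ℝ) / N ≤ e ^ 2 * ((Int.gcd c N : ℝ) / N) := by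
        rw [← mul_div_assoc]; gcongr; exact_mod_cast hgcd
    _ ≤ e ^ 2 * Complex.normSq (c * z + d) := by
        gcongr
        exact gcd_div_le_normSq_of_isCoprime hN hz hmax (Int.isCoprime_iff_gcd_eq_one.2 hcop)
    _ = Complex.normSq (((c * e : ℤ) : ℂ) * z + (d * e : ℤ)) := by
        rw [show ((c * e : ℤ) : ℂ) * z + (d * e : ℤ) = e * (c * z + d) by push_cast; ring,
          Complex.normSq_mul, Complex.normSq_natCast, sq]

end MaximalPoint

lemma sqrt_three_div_two_le_im {w : ℂ} (hw : 0 ≤ w.im)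
    (h : ∀ d : ℤ, 1 ≤ Complex.normSq (w + d)) :
    √3 / 2 ≤ w.im := by
  have hre := abs_le.1 (abs_sub_round w.re)
  have h1 := h (-round w.re)
  simp only [Int.cast_neg, Complex.normSq_apply, Complex.add_re, Complex.add_im, Complex.neg_re,
    Complex.neg_im, Complex.intCast_re, Complex.intCast_im, neg_zero, add_zero] at h1
  rw [div_le_iff₀ two_pos, Real.sqrt_le_left (by positivity)]
  nlinarith

theorem stmt8_general (N : ℕ) (hsf : Squarefree N) (z : ℂ) (hz : 0 < z.im)
    (hmax : ∀ σ ∈ AtkinLehner N, (moebius σ z).im ≤ z.im) :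
    z.im ≥ Real.sqrt 3 / (2 * N) ∧
    ∀ c d : ℤ, ¬(c = 0 ∧ d = 0) →
      ‖(c : ℂ) * z + (d : ℂ)‖ ^ 2 ≥ (Int.gcd c N : ℝ) / N := by
  have hspacing : ∀ c d : ℤ, ¬(c = 0 ∧ d = 0) →
      ‖(c : ℂ) * z + (d : ℂ)‖ ^ 2 ≥ (Int.gcd c N : ℝ) / N := fun c d hcd => by
    rw [Complex.sq_norm]
    exact gcd_div_le_normSq hsf hz hmax hcd
  refine ⟨?_, hspacing⟩
  have hN : (N : ℝ) ≠ 0 := Nat.cast_ne_zero.2 hsf.ne_zero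
  have hNz : √3 / 2 ≤ N * z.im := by
    have him : ((N : ℂ) * z).im = N * z.im := by simp
    rw [← him]
    refine sqrt_three_div_two_le_im (him ▸ by positivity) fun d => ?_
    simpa [Complex.sq_norm, div_self hN] using hspacing N d (by simp [hsf.ne_zero])
  rw [ge_iff_le, div_le_iff₀ (by positivity)]
  linarith

/-- Spacing lemma: if z ∈ ℍ has maximal imaginary part under the orbit of A₀(N),
    then Im(z) ≥ √3/(2N) and |cz+d|² ≥ gcd(c,N)/N for all (c,d) ≠ (0,0). -/
theorem stmt8 (N : ℕ) (hN : 0 < N) (hsf : Squarefree N) (z : ℂ) (hz : 0 < z.im)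
    (hmax : ∀ σ ∈ AtkinLehner N, (moebius σ z).im ≤ z.im) :
    z.im ≥ Real.sqrt 3 / (2 * N) ∧
    ∀ c d : ℤ, ¬(c = 0 ∧ d = 0) →
      ‖(c : ℂ) * z + (d : ℂ)‖ ^ 2 ≥ (Int.gcd c N : ℝ) / N :=
  stmt8_general N hsf z hz hmax
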